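/- arXiv:2204.11388 — 3 statements merged into one kernel-verified Lean document; each statement's English description precedes it below -/
import Mathlib

section
/- Let f : {0,1}^n → {0,1}^m satisfy the Simon promise for a hidden string s ≠ 0^n (i.e., f(x) = f(y) iff x = y or x ⊕ y = s). Write s = s₁s₂ with |s₁| = n−t, |s₂| = t. For u ∈ {0,1}^{n−t}, define the multiset G(u) = {f(uw) : w ∈ {0,1}^t}. Then for all u, v ∈ {0,1}^{n−t}, G(u) = G(v) if and only if u = v or u ⊕ v = s₁. -/
lemma append_add {k t : ℕ} (u v : Fin k → ZMod 2) (w w' : Fin t → ZMod 2) :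
    Fin.append u w + Fin.append v w' = Fin.append (u + v) (w + w') := by
  funext i
  refine Fin.addCases (fun i => ?_) (fun i => ?_) i <;>
    simp [Fin.append_left, Fin.append_right]

/-- Theorem 1 of the paper: under the Simon promise with hidden string
`s = s₁ ++ s₂ ≠ 0`, the multisets `G(u) = {f(u ++ w) : w}` satisfy
`G(u) = G(v) ↔ u = v ∨ u ⊕ v = s₁`. -/
theorem simon_multiset_promise (k t m : ℕ) (ht : 1 ≤ t)
    (f : (Fin (k + t) → ZMod 2) → (Fin m → ZMod 2))
    (s₁ : Fin k → ZMod 2) (s₂ : Fin t → ZMod 2)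
    (hs : Fin.append s₁ s₂ ≠ 0)
    (hf : ∀ x y, f x = f y ↔ (x = y ∨ x + y = Fin.append s₁ s₂)) :
    ∀ u v : Fin k → ZMod 2,
      Multiset.map (fun w => f (Fin.append u w))
          (Finset.univ : Finset (Fin t → ZMod 2)).val
        = Multiset.map (fun w => f (Fin.append v w))
          (Finset.univ : Finset (Fin t → ZMod 2)).val
      ↔ (u = v ∨ u + v = s₁) := by
  intro u v
  constructor
  · intro h
    have hmem : f (Fin.append u 0) ∈ Multiset.map (fun w => f (Fin.append v w))
        (Finset.univ : Finset (Fin t → ZMod 2)).val := by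
      rw [← h]
      exact Multiset.mem_map_of_mem _ (Finset.mem_univ 0)
    obtain ⟨w', -, hw'⟩ := Multiset.mem_map.mp hmem
    rcases (hf _ _).mp hw'.symm with heq | hsum
    · left
      funext i
      have := congrFun heq (Fin.castAdd t i)
      simpa [Fin.append_left] using this
    · right
      rw [append_add] at hsum
      funext i
      have := congrFun hsum (Fin.castAdd t i)
      simpa [Fin.append_left] using this
  · rintro (rfl | hsum)
    · rfl
    · have key : ∀ w, f (Fin.append u w) = f (Fin.append v (w + s₂)) := by
        intro w
        refine (hf _ _).mpr (Or.inr ?_)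
        rw [append_add, hsum]
        have : w + (w + s₂) = s₂ := by
          funext i
          rw [← add_assoc]
          simp [CharTwo.add_self_eq_zero]
        rw [this]
      calc Multiset.map (fun w => f (Fin.append u w)) Finset.univ.val
          = Multiset.map (fun w => f (Fin.append v (w + s₂))) Finset.univ.val := by
            exact Multiset.map_congr rfl (fun w _ => key w)
        _ = Multiset.map (fun w => f (Fin.append v w))
              (Multiset.map (fun w => w + s₂) Finset.univ.val) := by
            rw [Multiset.map_map]; rfl
        _ = Multiset.map (fun w => f (Fin.append v w)) Finset.univ.val := by
            congr 1
            have := Finset.map_univ_equiv (Equiv.addRight s₂)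
            calc Multiset.map (fun w => w + s₂) Finset.univ.val
                = (Finset.univ.map (Equiv.addRight s₂).toEmbedding).val := rfl
              _ = Finset.univ.val := by rw [this]
end

section
/- Let f : {0,1}^n → {0,1}^m satisfy the Simon promise for hidden string s = s₁s₂ with s₁ ≠ 0^{n−t}. Define F : {0,1}^{n−t} → Multiset ({0,1}^m) by F(u) = {f(uw) : w ∈ {0,1}^t}. Then F itself satisfies the Simon promise on {0,1}^{n−t} with hidden string s₁: ∀ u v, F u = F v ↔ (u = v ∨ u ⊕ v = s₁). -/
lemma append_add_aux {k t : ℕ} (a c : Fin k → ZMod 2) (b d : Fin t → ZMod 2) :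
    Fin.append a b + Fin.append c d = Fin.append (a + c) (b + d) := by
  funext i
  refine Fin.addCases (fun i => ?_) (fun i => ?_) i <;>
    simp [Fin.append_left, Fin.append_right]

/-- If `s₁ ≠ 0`, the multiset-valued function `F(u) = {f(u ++ w) : w}`
itself satisfies the Simon promise with hidden string `s₁`. -/
theorem simon_induced_promise (k t m : ℕ)
    (f : (Fin (k + t) → ZMod 2) → (Fin m → ZMod 2))
    (s₁ : Fin k → ZMod 2) (s₂ : Fin t → ZMod 2)
    (hs₁ : s₁ ≠ 0)
    (hf : ∀ x y, f x = f y ↔ (x = y ∨ x + y = Fin.append s₁ s₂)) :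
    ∀ u v : Fin k → ZMod 2,
      Multiset.map (fun w => f (Fin.append u w))
          (Finset.univ : Finset (Fin t → ZMod 2)).val
        = Multiset.map (fun w => f (Fin.append v w))
          (Finset.univ : Finset (Fin t → ZMod 2)).val
      ↔ (u = v ∨ u + v = s₁) := by
  intro u v
  constructor
  · intro h
    have hmem : f (Fin.append u 0) ∈ Multiset.map (fun w => f (Fin.append v w))
        (Finset.univ : Finset (Fin t → ZMod 2)).val := by
      rw [← h]
      exact Multiset.mem_map_of_mem _ (Finset.mem_univ_val _)
    obtain ⟨w, -, hw⟩ := Multiset.mem_map.mp hmem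
    rcases (hf _ _).mp hw.symm with heq | heq
    · left
      funext i
      have := congrFun heq (Fin.castAdd t i)
      simpa [Fin.append_left] using this
    · right
      rw [append_add_aux] at heq
      funext i
      have := congrFun heq (Fin.castAdd t i)
      simpa [Fin.append_left] using this
  · rintro (rfl | h)
    · rfl
    · have key : ∀ w : Fin t → ZMod 2, f (Fin.append u w) = f (Fin.append v (w + s₂)) := by
        intro w
        refine (hf _ _).mpr (Or.inr ?_)
        rw [append_add_aux, h]
        have h2 : w + (w + s₂) = s₂ := by
          funext i
          have h0 : w i + w i = 0 := CharTwo.add_self_eq_zero _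
          simp [Pi.add_apply, ← add_assoc, h0]
        rw [h2]
      calc Multiset.map (fun w => f (Fin.append u w))
            (Finset.univ : Finset (Fin t → ZMod 2)).val
          = Multiset.map ((fun w => f (Fin.append v w)) ∘ (Equiv.addRight s₂))
            (Finset.univ : Finset (Fin t → ZMod 2)).val := by
              apply Multiset.map_congr rfl
              intro w _
              simpa using key w
        _ = Multiset.map (fun w => f (Fin.append v w))
            (Multiset.map (Equiv.addRight s₂)
              (Finset.univ : Finset (Fin t → ZMod 2)).val) := by
              rw [Multiset.map_map]
        _ = _ := by
              congr 1
              have h3 := congrArg Finset.val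
                (Finset.map_univ_equiv (Equiv.addRight s₂))
              rw [Finset.map_val] at h3
              simpa using h3
end

section
/- Let f : {0,1}^n → {0,1}^m satisfy the Simon promise for hidden string s = s₁s₂ with s₁ ≠ 0^{n−t}. Define S(u) as the concatenation of the 2^t values f(uw), w ∈ {0,1}^t, in lexicographic (sorted) order. Then for all u, v ∈ {0,1}^{n−t}: S(u) = S(v) if and only if u = v or u ⊕ v = s₁. (Main theorem of the paper.) -/
/-!
If `u + v = s₁`, then `w ↦ s₂ - w` pairs each input `u ++ w` of block `u` with the input
`v ++ (s₂ - w)` of block `v`, the two summing to `s₁ ++ s₂`; so both blocks take the same multiset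
of values, and sorting only sees that multiset. Conversely, if the sorted lists agree, the value
`f (u ++ 0)` equals some `f (v ++ w')`, and the promise forces `u ++ 0 = v ++ w'` or
`u ++ 0 + v ++ w' = s₁ ++ s₂`, i.e. `u = v` or `u + v = s₁`.
-/

namespace Fin

variable {α : Type*} {k t : ℕ}

theorem append_inj_iff {u v : Fin k → α} {w w' : Fin t → α} :
    append u w = append v w' ↔ u = v ∧ w = w' :=
  ((appendEquiv k t).injective.eq_iff (a := (u, w)) (b := (v, w'))).trans Prod.ext_iff

theorem append_add_append [Add α] (u v : Fin k → α) (w w' : Fin t → α) :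
    append u w + append v w' = append (u + v) (w + w') := by
  ext i
  cases i using addCases <;> simp

end Fin

namespace Multiset

variable {β γ : Type*} (r : β → β → Prop) [DecidableRel r] [IsTrans β r] [Std.Antisymm r]
  [Std.Total r]

theorem sort_inj {s s' : Multiset β} : s.sort r = s'.sort r ↔ s = s' :=
  ⟨fun h => by rw [← sort_eq s r, h, sort_eq], congrArg (sort · r)⟩

theorem sort_map_val (s : Finset γ) (g : γ → β) :
    (s.val.map g).sort r = (s.toList.map g).mergeSort (r · ·) := by
  rw [← Finset.coe_toList s, map_coe, coe_sort]

end Multiset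

def SimonPromise {G β : Type*} [Add G] (f : G → β) (s : G) : Prop :=
  ∀ x y, f x = f y ↔ x = y ∨ x + y = s

section Blocks

variable {α β : Type*} {k t : ℕ} {f : (Fin (k + t) → α) → β}
  {s₁ : Fin k → α} {s₂ : Fin t → α}

theorem SimonPromise.eq_or_add_eq_of_apply_append_eq [Add α]
    (hf : SimonPromise f (Fin.append s₁ s₂)) {u v : Fin k → α} {w w' : Fin t → α}
    (h : f (Fin.append u w) = f (Fin.append v w')) : u = v ∨ u + v = s₁ := by
  rcases (hf _ _).1 h with h | h
  · exact .inl (Fin.append_inj_iff.1 h).1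
  · rw [Fin.append_add_append] at h
    exact .inr (Fin.append_inj_iff.1 h).1

variable [Fintype α]

def blockValues (f : (Fin (k + t) → α) → β) (u : Fin k → α) : Multiset β :=
  Finset.univ.val.map fun w : Fin t → α => f (Fin.append u w)

variable [AddCommGroup α]

theorem SimonPromise.blockValues_eq_of_add_eq (hf : SimonPromise f (Fin.append s₁ s₂))
    {u v : Fin k → α} (h : u + v = s₁) : blockValues f u = blockValues f v := by
  have hpair (w : Fin t → α) : f (Fin.append u w) = f (Fin.append v (s₂ - w)) :=
    (hf _ _).2 <| .inr <| by rw [Fin.append_add_append, h, add_sub_cancel]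
  calc blockValues f u
      = (Finset.univ.val.map (Equiv.subLeft s₂)).map fun w => f (Fin.append v w) := by
        rw [Multiset.map_map]
        exact Multiset.map_congr rfl fun w _ => hpair w
    _ = blockValues f v := by rw [Multiset.map_univ_val_equiv]; rfl

theorem SimonPromise.blockValues_eq_iff (hf : SimonPromise f (Fin.append s₁ s₂))
    (u v : Fin k → α) : blockValues f u = blockValues f v ↔ u = v ∨ u + v = s₁ := by
  refine ⟨fun h => ?_, ?_⟩
  · have hmem : f (Fin.append u 0) ∈ blockValues f v :=
      h ▸ Multiset.mem_map_of_mem _ (Finset.mem_univ_val 0)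
    obtain ⟨w', -, hw'⟩ := Multiset.mem_map.1 hmem
    exact hf.eq_or_add_eq_of_apply_append_eq hw'.symm
  · rintro (rfl | h)
    · rfl
    · exact hf.blockValues_eq_of_add_eq h

end Blocks

theorem simon_sorted_values_promise_general (k t m : ℕ)
    [LinearOrder (Fin m → ZMod 2)]
    (f : (Fin (k + t) → ZMod 2) → (Fin m → ZMod 2))
    (s₁ : Fin k → ZMod 2) (s₂ : Fin t → ZMod 2)
    (hf : ∀ x y, f x = f y ↔ (x = y ∨ x + y = Fin.append s₁ s₂)) :
    ∀ u v : Fin k → ZMod 2,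
      (((Finset.univ : Finset (Fin t → ZMod 2)).toList.map
          (fun w => f (Fin.append u w))).mergeSort (fun a b => decide (a ≤ b))
        = ((Finset.univ : Finset (Fin t → ZMod 2)).toList.map
          (fun w => f (Fin.append v w))).mergeSort (fun a b => decide (a ≤ b)))
      ↔ (u = v ∨ u + v = s₁) := by
  intro u v
  rw [← Multiset.sort_map_val, ← Multiset.sort_map_val, Multiset.sort_inj]
  exact SimonPromise.blockValues_eq_iff hf u v

/-- Main theorem of the paper: with `s₁ ≠ 0`, the sorted concatenation `S(u)`
of the block values satisfies `S(u) = S(v) ↔ u = v ∨ u ⊕ v = s₁`. -/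
theorem simon_sorted_values_promise (k t m : ℕ)
    [LinearOrder (Fin m → ZMod 2)]
    (f : (Fin (k + t) → ZMod 2) → (Fin m → ZMod 2))
    (s₁ : Fin k → ZMod 2) (s₂ : Fin t → ZMod 2)
    (hs₁ : s₁ ≠ 0)
    (hf : ∀ x y, f x = f y ↔ (x = y ∨ x + y = Fin.append s₁ s₂)) :
    ∀ u v : Fin k → ZMod 2,
      (((Finset.univ : Finset (Fin t → ZMod 2)).toList.map
          (fun w => f (Fin.append u w))).mergeSort (fun a b => decide (a ≤ b))
        = ((Finset.univ : Finset (Fin t → ZMod 2)).toList.map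
          (fun w => f (Fin.append v w))).mergeSort (fun a b => decide (a ≤ b)))
      ↔ (u = v ∨ u + v = s₁) :=
  simon_sorted_values_promise_general k t m f s₁ s₂ hf
end
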